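/- arXiv:2311.06080 — 2 statements merged into one kernel-verified Lean document; each statement's English description precedes it below -/
import Mathlib

section
/- Let M₂(a) denote the number of pairs (n,k) of positive integers with 1 ≤ k ≤ n such that the Stirling number of the second kind S(n,k) equals a. For every integer a ≥ 2 and every positive integer b such that S(2b,b) > a, one has M₂(a) ≤ 2b. -/
/-!
Every solution of `S(n, k) = a ≥ 2` has `2 ≤ k < n`. On such a region the Stirling numbers are
strictly increasing along each column (`n ↦ S(n, k)`) and along each diagonal `k ↦ S(k + d, k)`
with `d ≥ 1`, so each column and each diagonal contains at most one solution. A solution with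
`k ≥ b` and `d = n - k ≥ b` would give `S(n, k) ≥ S(k + b, k) ≥ S(2b, b) > a` by monotonicity, so
every solution lies in one of the `b` columns `k < b` or one of the `b` diagonals `d < b`.
-/

/-- Stirling numbers of the second kind, defined by the standard recurrence. -/
def stirling2 : ℕ → ℕ → ℕ
  | 0, 0 => 1
  | 0, _ + 1 => 0
  | _ + 1, 0 => 0
  | n + 1, k + 1 => stirling2 n k + (k + 1) * stirling2 n (k + 1)

/-- `M₂ a` is the number of pairs `(n, k)` with `1 ≤ k ≤ n` and `S(n, k) = a`. -/
noncomputable def M2 (a : ℕ) : ℕ :=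
  Nat.card {p : ℕ × ℕ // 1 ≤ p.2 ∧ p.2 ≤ p.1 ∧ stirling2 p.1 p.2 = a}

theorem stirling2_eq_stirlingSecond : stirling2 = Nat.stirlingSecond := by
  funext n k
  induction n generalizing k with
  | zero => cases k <;> rfl
  | succ n ih =>
    cases k with
    | zero => rfl
    | succ k => rw [stirling2, Nat.stirlingSecond_succ_succ, ih, ih, add_comm]

namespace Nat

theorem stirlingSecond_pos {n k : ℕ} (hk : k ≠ 0) (hkn : k ≤ n) : 0 < stirlingSecond n k := by
  induction n with
  | zero => omega
  | succ n ih =>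
    rcases hkn.lt_or_eq with hkn | rfl
    · have := ih (by omega)
      rw [stirlingSecond_succ_left n k hk]
      positivity
    · simp [stirlingSecond_self]

theorem stirlingSecond_le_one_of_le_one {n k : ℕ} (hk : k ≤ 1) : stirlingSecond n k ≤ 1 := by
  rcases n with _ | n <;> interval_cases k <;> simp [stirlingSecond_one_right]

theorem stirlingSecond_le_one_of_le {n k : ℕ} (h : n ≤ k) : stirlingSecond n k ≤ 1 := by
  rcases h.lt_or_eq with h | rfl
  · simp [stirlingSecond_eq_zero_of_lt h]
  · simp [stirlingSecond_self]

theorem two_le_and_lt_of_one_lt_stirlingSecond {n k : ℕ} (h : 1 < stirlingSecond n k) :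
    2 ≤ k ∧ k < n := by
  by_contra! hc
  have : stirlingSecond n k ≤ 1 := (le_or_gt k 1).elim stirlingSecond_le_one_of_le_one
    fun hk => stirlingSecond_le_one_of_le (hc hk)
  omega

theorem monotone_stirlingSecond_column {k : ℕ} (hk : k ≠ 0) :
    Monotone fun d => stirlingSecond (k + d) k := by
  refine monotone_nat_of_le_succ fun d => ?_
  obtain ⟨j, rfl⟩ := exists_eq_succ_of_ne_zero hk
  rw [← add_assoc, stirlingSecond_succ_succ]
  nlinarith

theorem strictMono_stirlingSecond_column {k : ℕ} (hk : 2 ≤ k) :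
    StrictMono fun d => stirlingSecond (k + d) k := by
  refine strictMono_nat_of_lt_succ fun d => ?_
  obtain ⟨j, rfl⟩ : ∃ j, k = j + 1 := ⟨k - 1, by omega⟩
  have := stirlingSecond_pos (n := j + 1 + d) (k := j) (by omega) (by omega)
  rw [← add_assoc, stirlingSecond_succ_succ]
  nlinarith

theorem monotone_stirlingSecond_diagonal (d : ℕ) :
    Monotone fun k => stirlingSecond (k + d) k := by
  refine monotone_nat_of_le_succ fun k => ?_
  rw [add_right_comm, stirlingSecond_succ_succ]
  omega

theorem strictMono_stirlingSecond_diagonal {d : ℕ} (hd : d ≠ 0) :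
    StrictMono fun k => stirlingSecond (k + d) k := by
  refine strictMono_nat_of_lt_succ fun k => ?_
  have := stirlingSecond_pos (n := k + d) (k := k + 1) (by omega) (by omega)
  rw [add_right_comm, stirlingSecond_succ_succ]
  nlinarith

theorem lt_of_stirlingSecond_add_lt_central {k d b : ℕ} (hk : k ≠ 0) (hbk : b ≤ k)
    (h : stirlingSecond (k + d) k < stirlingSecond (2 * b) b) : d < b := by
  by_contra! hb
  have : stirlingSecond (b + b) b ≤ stirlingSecond (k + d) k :=
    (monotone_stirlingSecond_diagonal b hbk).trans (monotone_stirlingSecond_column hk hb)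
  rw [two_mul] at h
  omega

theorem exists_injective_stirlingSecond_fiber {a b : ℕ} (ha : 1 < a)
    (h : a < stirlingSecond (2 * b) b) :
    ∃ f : {p : ℕ × ℕ // stirlingSecond p.1 p.2 = a} → Fin b ⊕ Fin b, Function.Injective f := by
  have hsol {n k : ℕ} (hs : stirlingSecond n k = a) :
      2 ≤ k ∧ 0 < n - k ∧ stirlingSecond (k + (n - k)) k = a := by
    obtain ⟨hk, hkn⟩ := two_le_and_lt_of_one_lt_stirlingSecond (hs ▸ ha)
    exact ⟨hk, by omega, by rwa [Nat.add_sub_cancel' hkn.le]⟩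
  have hdiag {n k : ℕ} (hs : stirlingSecond n k = a) (hbk : ¬k < b) : n - k < b := by
    obtain ⟨hk, -, hs⟩ := hsol hs
    exact lt_of_stirlingSecond_add_lt_central (by omega) (not_lt.mp hbk) (hs.trans_lt h)
  -- A solution `(n, k)` is recorded by its column `k` if `k < b`, by its diagonal `n - k` otherwise.
  refine ⟨fun p => if hk : p.1.2 < b then .inl ⟨p.1.2, hk⟩ else .inr ⟨p.1.1 - p.1.2, hdiag p.2 hk⟩,
    ?_⟩
  rintro ⟨⟨n₁, k₁⟩, hs₁⟩ ⟨⟨n₂, k₂⟩, hs₂⟩ hf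
  obtain ⟨hk₁, hd₁, hs₁⟩ := hsol hs₁
  obtain ⟨hk₂, hd₂, hs₂⟩ := hsol hs₂
  dsimp only at hf hk₁ hd₁ hs₁ hk₂ hd₂ hs₂
  simp only [Subtype.mk.injEq, Prod.mk.injEq]
  split_ifs at hf <;> simp only [Sum.inl.injEq, Sum.inr.injEq, Fin.mk.injEq] at hf
  · subst hf
    have := strictMono_stirlingSecond_column hk₁ |>.injective (hs₁.trans hs₂.symm)
    omega
  · have := strictMono_stirlingSecond_diagonal hd₁.ne' |>.injective
      (hs₁.trans (hf ▸ hs₂.symm))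
    omega

end Nat

theorem M2_le_of_central_gt_general (a b : ℕ) (ha : 2 ≤ a)
    (h : a < stirling2 (2 * b) b) : M2 a ≤ 2 * b := by
  rw [stirling2_eq_stirlingSecond] at h
  obtain ⟨f, hf⟩ := Nat.exists_injective_stirlingSecond_fiber ha h
  let forget : {p : ℕ × ℕ // 1 ≤ p.2 ∧ p.2 ≤ p.1 ∧ p.1.stirlingSecond p.2 = a} →
      {p : ℕ × ℕ // p.1.stirlingSecond p.2 = a} := Subtype.map id fun _ hp => hp.2.2
  have hforget : forget.Injective := Subtype.map_injective _ Function.injective_id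
  rw [M2, stirling2_eq_stirlingSecond]
  simpa [two_mul] using Nat.card_le_card_of_injective _ (hf.comp hforget)

/-- If `a ≥ 2` and `b ≥ 1` satisfies `S(2b, b) > a`, then `M₂(a) ≤ 2b`. -/
theorem M2_le_of_central_gt (a b : ℕ) (ha : 2 ≤ a) (hb : 1 ≤ b)
    (h : a < stirling2 (2 * b) b) : M2 a ≤ 2 * b :=
  M2_le_of_central_gt_general a b ha h
end

section
/- The Stirling numbers of the second kind satisfy S(14,11) = S(364,363) = 66066; in particular the equation S(x,k) = S(y,l) has the solution (x,k,y,l) = (14,11,364,363) with (x,k) ≠ (y,l), which disproves the conjecture of Ferenczik, Pintér and Porvázsnyik that (5,2,6,5) and (13,2,91,90) are the only such coincidences. -/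
lemma stirling2_gt : ∀ n k, n < k → stirling2 n k = 0
  | 0, _ + 1, _ => rfl
  | n + 1, k + 1, h => by
    have h' := Nat.lt_of_succ_lt_succ h
    simp [stirling2, stirling2_gt n k h', stirling2_gt n (k+1) (Nat.lt_succ_of_lt h')]

lemma stirling2_self : ∀ n, stirling2 n n = 1
  | 0 => rfl
  | n + 1 => by simp [stirling2, stirling2_self n, stirling2_gt n (n+1) (Nat.lt_succ_self n)]

lemma stirling2_succ : ∀ n, 2 * stirling2 (n + 1) n = n * (n + 1)
  | 0 => rfl
  | n + 1 => by
    have h := stirling2_succ n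
    show 2 * (stirling2 (n + 1) n + (n + 1) * stirling2 (n + 1) (n + 1)) = _
    rw [stirling2_self, Nat.mul_add, h]
    ring

/-- `S(14,11) = S(364,363) = 66066`, so `(x,k,y,l) = (14,11,364,363)` is a nontrivial
solution of `S(x,k) = S(y,l)` with `(x,k) ≠ (y,l)`; in particular the conjecture of
Ferenczik, Pintér and Porvázsnyik — that the only nontrivial coincidences of Stirling
numbers of the second kind are `(5,2,6,5)` and `(13,2,91,90)` — is false. -/
theorem stirling2_coincidence_66066 :
    stirling2 14 11 = 66066 ∧ stirling2 364 363 = 66066 ∧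
    ((14, 11) : ℕ × ℕ) ≠ (364, 363) ∧
    ¬ (∀ x k y l : ℕ, 2 ≤ k → k < x → 2 ≤ l → l < y → (x, k) ≠ (y, l) →
        stirling2 x k = stirling2 y l →
        ((x, k, y, l) = (5, 2, 6, 5) ∨ (x, k, y, l) = (6, 5, 5, 2) ∨
          (x, k, y, l) = (13, 2, 91, 90) ∨ (x, k, y, l) = (91, 90, 13, 2))) := by
  have h1 : stirling2 14 11 = 66066 := by decide
  have h2 : stirling2 364 363 = 66066 := by
    have := stirling2_succ 363
    norm_num at this
    omega
  refine ⟨h1, h2, by decide, fun H => ?_⟩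
  have := H 14 11 364 363 (by norm_num) (by norm_num) (by norm_num) (by norm_num)
    (by decide) (h1.trans h2.symm)
  simp_all
end
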